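/- Let M = [1,∞) × N with metric dr² + s(r)² g_N, where N is a compact m-dimensional manifold and s(r) = r^{−1/m}. For Ω_{R} = {R < r < eR}, we have Vol(Ω_R) = |N| for all R ≥ 1, while Area(∂Ω_R) = |N|(R^{−1} + (eR)^{−1}) → 0 as R → ∞. Consequently the isoperimetric inequality |∂Ω| ≥ |∂Ω^#| fails on M. -/

import Mathlib

open Filter

lemma Real.log_exp_one_mul_sub_log {R : ℝ} (hR : R ≠ 0) :
    Real.log (Real.exp 1 * R) - Real.log R = 1 := by
  rw [Real.log_mul (Real.exp_ne_zero 1) hR, Real.log_exp, add_sub_cancel_right]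

lemma tendsto_const_mul_inv_add_inv_mul_atTop_zero (c a : ℝ) :
    Tendsto (fun R : ℝ => c * (R⁻¹ + (a * R)⁻¹)) atTop (nhds 0) := by
  have h : Tendsto (fun R : ℝ => R⁻¹ + a⁻¹ * R⁻¹) atTop (nhds (0 + a⁻¹ * 0)) :=
    tendsto_inv_atTop_zero.add (tendsto_inv_atTop_zero.const_mul a⁻¹)
  simpa only [mul_inv, add_zero, mul_zero] using h.const_mul c

theorem stmt7_general (VN : ℝ) (vol area : ℝ → ℝ)
    (hvol : ∀ R, vol R = VN * (Real.log (Real.exp 1 * R) - Real.log R))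
    (harea : ∀ R, area R = VN * (R⁻¹ + (Real.exp 1 * R)⁻¹)) :
    (∀ R ≥ (1 : ℝ), vol R = VN) ∧
    Tendsto area atTop (nhds 0) ∧
    ∀ ε > (0 : ℝ), ∃ R ≥ (1 : ℝ), vol R = VN ∧ area R < ε := by
  have hvol_eq : ∀ R ≥ (1 : ℝ), vol R = VN := fun R hR => by
    rw [hvol, Real.log_exp_one_mul_sub_log (by positivity), mul_one]
  have harea_lim : Tendsto area atTop (nhds 0) := by
    simpa only [← harea] using tendsto_const_mul_inv_add_inv_mul_atTop_zero VN (Real.exp 1)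
  refine ⟨hvol_eq, harea_lim, fun ε hε => ?_⟩
  obtain ⟨R, hR, hsmall⟩ :=
    ((eventually_ge_atTop 1).and (harea_lim.eventually (gt_mem_nhds hε))).exists
  exact ⟨R, hR, hvol_eq R hR, hsmall⟩

/-- On `M = [1,∞) × N` with `g = dr² + r^{-2/m} g_N` (warping function `s(r) = r^{-1/m}`),
the annular regions `Ω_R = {R < r < eR}` have `Vol(Ω_R) = |N| (log(eR) - log R) = |N|`
for all `R ≥ 1`, while `Area(∂Ω_R) = |N| (R⁻¹ + (eR)⁻¹) → 0` as `R → ∞`; consequently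
the isoperimetric inequality `|∂Ω| ≥ |∂Ω^#|` fails on `M`. -/
theorem stmt7 (VN : ℝ) (hVN : 0 < VN) (vol area : ℝ → ℝ)
    (hvol : ∀ R, vol R = VN * (Real.log (Real.exp 1 * R) - Real.log R))
    (harea : ∀ R, area R = VN * (R⁻¹ + (Real.exp 1 * R)⁻¹)) :
    (∀ R ≥ (1 : ℝ), vol R = VN) ∧
    Tendsto area atTop (nhds 0) ∧
    ∀ ε > (0 : ℝ), ∃ R ≥ (1 : ℝ), vol R = VN ∧ area R < ε :=
  stmt7_general VN vol area hvol harea
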